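/- Let u, v be C² functions defined on a neighborhood of a point p ∈ ℝ², and let γ, γ̃ : (−δ, δ) → ℝ² be C² curves parametrized by arc length with γ(0) = γ̃(0) = p and γ'(0) = γ̃'(0) = w. Set ν := Jγ', ν̃ := Jγ̃' (J the counterclockwise rotation by π/2), and let κ := ⟨γ''(0), ν(0)⟩, κ̃ := ⟨γ̃''(0), ν̃(0)⟩ be the signed curvatures at p. Suppose u(γ(s)) = 0 and v(γ̃(s)) = 0 for all s, and that there is a C¹ function g on a neighborhood of 𝕊¹ ⊂ ℝ² with ⟨Du(γ(s)), ν(s)⟩ = g(ν(s)) and ⟨Dv(γ̃(s)), ν̃(s)⟩ = g(ν̃(s)) for all s. If κ̃ ≠ 0, then D²u_p(w, Y) = (κ/κ̃) · D²v_p(w, Y) for every Y ∈ ℝ². -/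

import Mathlib

/-!
Differentiate the two identities `⟨Du(γ), γ'⟩ = 0` (from `u ∘ γ = 0`) and
`⟨Du(γ), Jγ'⟩ = g(Jγ')` at `s = 0`. Since `γ` has unit speed, `γ''(0) = κ Jw`, and one gets
`D²u_p(w, w) = -κ g(Jw)` and `D²u_p(w, Jw) = -κ Dg(Jw) w`. Thus `D²u_p(w, ·) = -κ ℓ` for a
linear form `ℓ` depending only on `g` and `w`; likewise `D²v_p(w, ·) = -κ̃ ℓ`.
-/

open Set

/-- Partial derivative in the `x` direction. -/
noncomputable def px (u : ℝ × ℝ → ℝ) (p : ℝ × ℝ) : ℝ := fderiv ℝ u p (1, 0)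

/-- Partial derivative in the `y` direction. -/
noncomputable def py (u : ℝ × ℝ → ℝ) (p : ℝ × ℝ) : ℝ := fderiv ℝ u p (0, 1)

/-- The gradient `Du = (u_x, u_y)`. -/
noncomputable def grad (u : ℝ × ℝ → ℝ) (p : ℝ × ℝ) : ℝ × ℝ := (px u p, py u p)

/-- The Hessian `D²u_p(v, w)` as a bilinear form. -/
noncomputable def hess (u : ℝ × ℝ → ℝ) (v w : ℝ × ℝ) (p : ℝ × ℝ) : ℝ :=
  fderiv ℝ (fun q => fderiv ℝ u q v) p w

/-- The determinant of the Hessian matrix of `u` at `p`. -/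
noncomputable def hessDet (u : ℝ × ℝ → ℝ) (p : ℝ × ℝ) : ℝ :=
  hess u (1, 0) (1, 0) p * hess u (0, 1) (0, 1) p -
    hess u (1, 0) (0, 1) p * hess u (0, 1) (1, 0) p

/-- The triple `(u_xx, u_xy, u_yy)` of second derivatives of `u` at `p`. -/
noncomputable def hessTriple (u : ℝ × ℝ → ℝ) (p : ℝ × ℝ) : ℝ × ℝ × ℝ :=
  (hess u (1, 0) (1, 0) p, hess u (1, 0) (0, 1) p, hess u (0, 1) (0, 1) p)

/-- Euclidean dot product on `ℝ × ℝ`. -/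
def dot (v w : ℝ × ℝ) : ℝ := v.1 * w.1 + v.2 * w.2

/-- Counterclockwise rotation by `π/2`. -/
def Jrot (v : ℝ × ℝ) : ℝ × ℝ := (-v.2, v.1)

/-- `Du : s → t` is an orientation-preserving (`C¹`) diffeomorphism from `s` onto `t`:
it is `C¹`, injective, has image `t`, has everywhere positive Jacobian determinant
(the determinant of the Hessian of `u`), and has a `C¹` inverse. -/
structure IsGradOPDiffeoOnto (u : ℝ × ℝ → ℝ) (s t : Set (ℝ × ℝ)) : Prop where
  contDiffOn : ContDiffOn ℝ 1 (grad u) s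
  injOn : Set.InjOn (grad u) s
  image_eq : grad u '' s = t
  jacPos : ∀ p ∈ s, 0 < hessDet u p
  inv : ∃ ginv : ℝ × ℝ → ℝ × ℝ, ContDiffOn ℝ 1 ginv t ∧ ∀ p ∈ s, ginv (grad u p) = p

open Filter Topology

lemma dot_grad (u : ℝ × ℝ → ℝ) (q z : ℝ × ℝ) : dot (grad u q) z = fderiv ℝ u q z := by
  have hz : z = z.1 • ((1, 0) : ℝ × ℝ) + z.2 • ((0, 1) : ℝ × ℝ) := by ext <;> simp
  conv_rhs => rw [hz, map_add, map_smul, map_smul]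
  simp only [dot, grad, px, py, smul_eq_mul]
  ring

lemma dot_Jrot_Jrot (z : ℝ × ℝ) : dot (Jrot z) (Jrot z) = dot z z := by
  simp only [dot, Jrot]; ring

lemma Jrot_Jrot (z : ℝ × ℝ) : Jrot (Jrot z) = -z := by
  ext <;> simp [Jrot]

lemma Jrot_smul (c : ℝ) (z : ℝ × ℝ) : Jrot (c • z) = c • Jrot z := by
  simp [Jrot]

lemma eq_dot_smul_add_dot_Jrot_smul {w : ℝ × ℝ} (hw : dot w w = 1) (z : ℝ × ℝ) :
    z = dot z w • w + dot z (Jrot w) • Jrot w := by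
  obtain ⟨w₁, w₂⟩ := w
  obtain ⟨z₁, z₂⟩ := z
  simp only [dot, Jrot, Prod.smul_mk, smul_eq_mul, Prod.mk_add_mk, Prod.mk.injEq] at hw ⊢
  constructor
  · linear_combination -z₁ * hw
  · linear_combination -z₂ * hw

lemma HasDerivAt.eq_dot_Jrot_smul_Jrot {T : ℝ → ℝ × ℝ} {a : ℝ × ℝ} {t : ℝ}
    (hT : HasDerivAt T a t) (hunit : ∀ᶠ s in 𝓝 t, dot (T s) (T s) = 1) :
    a = dot a (Jrot (T t)) • Jrot (T t) := by
  have h₁ : HasDerivAt (fun s => (T s).1) a.1 t := hT.fst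
  have h₂ : HasDerivAt (fun s => (T s).2) a.2 t := hT.snd
  have hderiv : HasDerivAt (fun s => dot (T s) (T s))
      (a.1 * (T t).1 + (T t).1 * a.1 + (a.2 * (T t).2 + (T t).2 * a.2)) t :=
    (h₁.mul h₁).add (h₂.mul h₂)
  have hdot : dot a (T t) = 0 := by
    have := hderiv.unique ((hasDerivAt_const t (1 : ℝ)).congr_of_eventuallyEq hunit)
    simp only [dot]
    linarith
  simpa [hdot] using eq_dot_smul_add_dot_Jrot_smul hunit.self_of_nhds a

/-- `hess u x y p` differentiates `∂ₓu` in the direction `y`; symmetry of the second derivative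
puts `x` first. -/
lemma hess_eq_fderiv_fderiv {u : ℝ × ℝ → ℝ} {p : ℝ × ℝ} (hu : ContDiffAt ℝ 2 u p)
    (x y : ℝ × ℝ) : hess u x y p = fderiv ℝ (fderiv ℝ u) p x y := by
  have hdiff : DifferentiableAt ℝ (fderiv ℝ u) p :=
    (hu.fderiv_right one_add_one_eq_two.le).differentiableAt one_ne_zero
  rw [hess, fderiv_clm_apply hdiff (differentiableAt_const x), hu.isSymmSndFDerivAt (by simp)]
  simp

section Curves

variable {E F : Type*} [NormedAddCommGroup E] [NormedSpace ℝ E] [NormedAddCommGroup F]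
  [NormedSpace ℝ F]

lemma fderiv_apply_eq_zero_of_comp_eventually_eq_zero {u : E → F} {γ : ℝ → E} {w : E} {s : ℝ}
    (hu : DifferentiableAt ℝ u (γ s)) (hγ : HasDerivAt γ w s)
    (hzero : ∀ᶠ r in 𝓝 s, u (γ r) = 0) :
    fderiv ℝ u (γ s) w = 0 :=
  (hu.hasFDerivAt.comp_hasDerivAt s hγ).unique
    ((hasDerivAt_const s (0 : F)).congr_of_eventuallyEq hzero)

lemma ContDiffAt.eventually_hasDerivAt {γ : ℝ → E} {t : ℝ} (hγ : ContDiffAt ℝ 2 γ t) :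
    ∀ᶠ s in 𝓝 t, HasDerivAt γ (deriv γ s) s :=
  (hγ.eventually (by simp)).mono fun _ hs => (hs.differentiableAt two_ne_zero).hasDerivAt

lemma ContDiffAt.hasDerivAt_deriv {γ : ℝ → E} {t : ℝ} (hγ : ContDiffAt ℝ 2 γ t) :
    HasDerivAt (deriv γ) (deriv (deriv γ) t) t :=
  ((hγ.derivWithin (m := 1) (by norm_num)).differentiableAt one_ne_zero).hasDerivAt

lemma ContDiffAt.hasDerivAt_fderiv_comp {u : E → F} {γ : ℝ → E} {w : E} {t : ℝ}
    (hu : ContDiffAt ℝ 2 u (γ t)) (hγ : HasDerivAt γ w t) :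
    HasDerivAt (fun s => fderiv ℝ u (γ s)) (fderiv ℝ (fderiv ℝ u) (γ t) w) t :=
  ((hu.fderiv_right one_add_one_eq_two.le).differentiableAt one_ne_zero).hasFDerivAt.comp_hasDerivAt
    t hγ

end Curves

section LevelCurve

variable {u g : ℝ × ℝ → ℝ} {γ : ℝ → ℝ × ℝ} {t : ℝ}

lemma eventually_fderiv_apply_deriv_eq_zero (hu : ContDiffAt ℝ 2 u (γ t))
    (hγ : ContDiffAt ℝ 2 γ t) (hzero : ∀ᶠ s in 𝓝 t, u (γ s) = 0) :
    ∀ᶠ s in 𝓝 t, fderiv ℝ u (γ s) (deriv γ s) = 0 := by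
  have hdiff : ∀ᶠ s in 𝓝 t, DifferentiableAt ℝ u (γ s) :=
    hγ.continuousAt.tendsto.eventually
      ((hu.eventually (by simp)).mono fun _ hq => hq.differentiableAt two_ne_zero)
  filter_upwards [hdiff, hγ.eventually_hasDerivAt, hzero.eventually_nhds] with s hus hγs hzs
  exact fderiv_apply_eq_zero_of_comp_eventually_eq_zero hus hγs hzs

variable (hu : ContDiffAt ℝ 2 u (γ t)) (hγ : ContDiffAt ℝ 2 γ t)
  (hunit : ∀ᶠ s in 𝓝 t, dot (deriv γ s) (deriv γ s) = 1) (hzero : ∀ᶠ s in 𝓝 t, u (γ s) = 0)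
include hu hγ hunit hzero

lemma fderiv_fderiv_deriv_deriv_of_level_curve
    (hNeumann : dot (grad u (γ t)) (Jrot (deriv γ t)) = g (Jrot (deriv γ t))) :
    fderiv ℝ (fderiv ℝ u) (γ t) (deriv γ t) (deriv γ t) =
      -(dot (deriv (deriv γ) t) (Jrot (deriv γ t)) * g (Jrot (deriv γ t))) := by
  have h := ((hu.hasDerivAt_fderiv_comp hγ.eventually_hasDerivAt.self_of_nhds).clm_apply
    hγ.hasDerivAt_deriv).unique ((hasDerivAt_const t (0 : ℝ)).congr_of_eventuallyEq
      (eventually_fderiv_apply_deriv_eq_zero hu hγ hzero))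
  rw [hγ.hasDerivAt_deriv.eq_dot_Jrot_smul_Jrot hunit, map_smul, ← dot_grad, hNeumann,
    smul_eq_mul] at h
  linarith

lemma fderiv_fderiv_deriv_Jrot_deriv_of_level_curve (hg : DifferentiableAt ℝ g (Jrot (deriv γ t)))
    (hNeumann : ∀ᶠ s in 𝓝 t, dot (grad u (γ s)) (Jrot (deriv γ s)) = g (Jrot (deriv γ s))) :
    fderiv ℝ (fderiv ℝ u) (γ t) (deriv γ t) (Jrot (deriv γ t)) =
      -(dot (deriv (deriv γ) t) (Jrot (deriv γ t)) *
        fderiv ℝ g (Jrot (deriv γ t)) (deriv γ t)) := by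
  have hJa :
      Jrot (deriv (deriv γ) t) = -dot (deriv (deriv γ) t) (Jrot (deriv γ t)) • deriv γ t := by
    conv_lhs => rw [hγ.hasDerivAt_deriv.eq_dot_Jrot_smul_Jrot hunit]
    rw [Jrot_smul, Jrot_Jrot, smul_neg, neg_smul]
  have hJ : HasDerivAt (fun s => Jrot (deriv γ s)) (Jrot (deriv (deriv γ) t)) t := by
    have ha := hγ.hasDerivAt_deriv
    have ha₂ : HasDerivAt (fun s => (deriv γ s).2) (deriv (deriv γ) t).2 t := ha.snd
    exact ha₂.neg.prodMk ha.fst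
  have h := ((hu.hasDerivAt_fderiv_comp hγ.eventually_hasDerivAt.self_of_nhds).clm_apply hJ).unique
    ((hg.hasFDerivAt.comp_hasDerivAt t hJ).congr_of_eventuallyEq
      (hNeumann.mono fun _ hs => (dot_grad _ _ _).symm.trans hs))
  rw [hJa, map_smul, map_smul, (eventually_fderiv_apply_deriv_eq_zero hu hγ hzero).self_of_nhds,
    smul_eq_mul, smul_eq_mul] at h
  linarith

theorem fderiv_fderiv_deriv_apply_of_level_curve (hg : DifferentiableAt ℝ g (Jrot (deriv γ t)))
    (hNeumann : ∀ᶠ s in 𝓝 t, dot (grad u (γ s)) (Jrot (deriv γ s)) = g (Jrot (deriv γ s)))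
    (Y : ℝ × ℝ) :
    fderiv ℝ (fderiv ℝ u) (γ t) (deriv γ t) Y =
      -dot (deriv (deriv γ) t) (Jrot (deriv γ t)) *
        (dot Y (deriv γ t) * g (Jrot (deriv γ t)) +
          dot Y (Jrot (deriv γ t)) * fderiv ℝ g (Jrot (deriv γ t)) (deriv γ t)) := by
  conv_lhs => rw [eq_dot_smul_add_dot_Jrot_smul hunit.self_of_nhds Y]
  rw [map_add, map_smul, map_smul, smul_eq_mul, smul_eq_mul,
    fderiv_fderiv_deriv_deriv_of_level_curve hu hγ hunit hzero hNeumann.self_of_nhds,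
    fderiv_fderiv_deriv_Jrot_deriv_of_level_curve hu hγ hunit hzero hg hNeumann]
  ring

end LevelCurve

theorem common_tangent_hessian_proportionality_general
    (Ω : Set (ℝ × ℝ)) (hΩ : IsOpen Ω) (p : ℝ × ℝ) (hp : p ∈ Ω)
    (u v : ℝ × ℝ → ℝ) (hu : ContDiffOn ℝ 2 u Ω) (hv : ContDiffOn ℝ 2 v Ω)
    (δ : ℝ) (hδ : 0 < δ)
    (γ γt : ℝ → ℝ × ℝ)
    (hγ : ContDiffOn ℝ 2 γ (Ioo (-δ) δ)) (hγt : ContDiffOn ℝ 2 γt (Ioo (-δ) δ))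
    (hγ0 : γ 0 = p) (hγt0 : γt 0 = p)
    (w : ℝ × ℝ) (hw : deriv γ 0 = w) (hwt : deriv γt 0 = w)
    (harc : ∀ s ∈ Ioo (-δ) δ, dot (deriv γ s) (deriv γ s) = 1)
    (harct : ∀ s ∈ Ioo (-δ) δ, dot (deriv γt s) (deriv γt s) = 1)
    (hzu : ∀ s ∈ Ioo (-δ) δ, u (γ s) = 0)
    (hzv : ∀ s ∈ Ioo (-δ) δ, v (γt s) = 0)
    (g : ℝ × ℝ → ℝ) (Ug : Set (ℝ × ℝ)) (hUg : IsOpen Ug)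
    (hUg1 : {z : ℝ × ℝ | dot z z = 1} ⊆ Ug) (hg : ContDiffOn ℝ 1 g Ug)
    (hNu : ∀ s ∈ Ioo (-δ) δ,
      dot (grad u (γ s)) (Jrot (deriv γ s)) = g (Jrot (deriv γ s)))
    (hNv : ∀ s ∈ Ioo (-δ) δ,
      dot (grad v (γt s)) (Jrot (deriv γt s)) = g (Jrot (deriv γt s)))
    (hκt : dot (deriv (deriv γt) 0) (Jrot (deriv γt 0)) ≠ 0) :
    ∀ Y : ℝ × ℝ, hess u w Y p =
      (dot (deriv (deriv γ) 0) (Jrot (deriv γ 0)) /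
        dot (deriv (deriv γt) 0) (Jrot (deriv γt 0))) * hess v w Y p := by
  intro Y
  have h0 : Ioo (-δ) δ ∈ 𝓝 (0 : ℝ) := Ioo_mem_nhds (by linarith) hδ
  have hup : ContDiffAt ℝ 2 u p := hu.contDiffAt (hΩ.mem_nhds hp)
  have hvp : ContDiffAt ℝ 2 v p := hv.contDiffAt (hΩ.mem_nhds hp)
  have hgν : DifferentiableAt ℝ g (Jrot w) := by
    refine (hg.contDiffAt (hUg.mem_nhds (hUg1 ?_))).differentiableAt one_ne_zero
    show dot (Jrot w) (Jrot w) = 1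
    rw [dot_Jrot_Jrot, ← hw]
    exact harc 0 (mem_of_mem_nhds h0)
  have hU := fderiv_fderiv_deriv_apply_of_level_curve (hγ0 ▸ hup) (hγ.contDiffAt h0)
    (eventually_of_mem h0 harc) (eventually_of_mem h0 hzu) (hw ▸ hgν) (eventually_of_mem h0 hNu) Y
  have hV := fderiv_fderiv_deriv_apply_of_level_curve (hγt0 ▸ hvp) (hγt.contDiffAt h0)
    (eventually_of_mem h0 harct) (eventually_of_mem h0 hzv) (hwt ▸ hgν) (eventually_of_mem h0 hNv) Y
  rw [hγ0, hw] at hU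
  rw [hγt0, hwt] at hV
  rw [hwt] at hκt
  rw [hess_eq_fderiv_fderiv hup, hess_eq_fderiv_fderiv hvp, hU, hV, hw, hwt]
  field_simp

/-- If `u`, `v` have level curves through `p` with common tangent `w`,
satisfying the same Neumann condition `⟨D·, ν⟩ = g(ν)`, and the curvature `κ̃` of the
`v`-curve at `p` is nonzero, then `D²u_p(w, Y) = (κ/κ̃) D²v_p(w, Y)` for every `Y`. -/
theorem common_tangent_hessian_proportionality
    (Ω : Set (ℝ × ℝ)) (hΩ : IsOpen Ω) (p : ℝ × ℝ) (hp : p ∈ Ω)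
    (u v : ℝ × ℝ → ℝ) (hu : ContDiffOn ℝ 2 u Ω) (hv : ContDiffOn ℝ 2 v Ω)
    (δ : ℝ) (hδ : 0 < δ)
    (γ γt : ℝ → ℝ × ℝ)
    (hγ : ContDiffOn ℝ 2 γ (Ioo (-δ) δ)) (hγt : ContDiffOn ℝ 2 γt (Ioo (-δ) δ))
    (hγΩ : ∀ s ∈ Ioo (-δ) δ, γ s ∈ Ω) (hγtΩ : ∀ s ∈ Ioo (-δ) δ, γt s ∈ Ω)
    (hγ0 : γ 0 = p) (hγt0 : γt 0 = p)
    (w : ℝ × ℝ) (hw : deriv γ 0 = w) (hwt : deriv γt 0 = w)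
    (harc : ∀ s ∈ Ioo (-δ) δ, dot (deriv γ s) (deriv γ s) = 1)
    (harct : ∀ s ∈ Ioo (-δ) δ, dot (deriv γt s) (deriv γt s) = 1)
    (hzu : ∀ s ∈ Ioo (-δ) δ, u (γ s) = 0)
    (hzv : ∀ s ∈ Ioo (-δ) δ, v (γt s) = 0)
    (g : ℝ × ℝ → ℝ) (Ug : Set (ℝ × ℝ)) (hUg : IsOpen Ug)
    (hUg1 : {z : ℝ × ℝ | dot z z = 1} ⊆ Ug) (hg : ContDiffOn ℝ 1 g Ug)
    (hNu : ∀ s ∈ Ioo (-δ) δ,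
      dot (grad u (γ s)) (Jrot (deriv γ s)) = g (Jrot (deriv γ s)))
    (hNv : ∀ s ∈ Ioo (-δ) δ,
      dot (grad v (γt s)) (Jrot (deriv γt s)) = g (Jrot (deriv γt s)))
    (hκt : dot (deriv (deriv γt) 0) (Jrot (deriv γt 0)) ≠ 0) :
    ∀ Y : ℝ × ℝ, hess u w Y p =
      (dot (deriv (deriv γ) 0) (Jrot (deriv γ 0)) /
        dot (deriv (deriv γt) 0) (Jrot (deriv γt 0))) * hess v w Y p :=
  common_tangent_hessian_proportionality_general Ω hΩ p hp u v hu hv δ hδ γ γt hγ hγt hγ0 hγt0 w hw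
    hwt harc harct hzu hzv g Ug hUg hUg1 hg hNu hNv hκt
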